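/- arXiv:2207.02752 — 5 statements merged into one kernel-verified Lean document; each statement's English description precedes it below -/
import Mathlib

section
/- Let A_k be the 6×6 integer matrix with rows (-1,-1,0,0,-1,0), (0,-1,0,0,-1,0), (0,0,1,1,1,0), (0,0,0,1,1,0), (0,0,0,0,0,0), (0,0,0,0,1,-k). Then for every integer k ≥ 2, the polynomial det(t·A_k - A_kᵀ) equals (t² - t + 1)² up to multiplication by ±t^j for some natural number j. -/
/-!
Write `M = t·A_k - A_kᵀ`. Its last column has only two nonzero entries, `-1` in row 4 and
`(1 - t)·k` in row 5 (counting from 0), so we expand along it. The cofactor of the `k`-entry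
vanishes: the corresponding principal `5 × 5` minor kills `(t, -t², t, -t², t² - t + 1)`. Hence
`det M` does not depend on `k`, and the other cofactor is `t` times the determinant of the block
diagonal matrix with blocks `t·B - Bᵀ` for `B = [[-1, -1], [0, -1]]` and `B = [[1, 1], [0, 1]]`,
each of determinant `t² - t + 1`.
-/

open Matrix Polynomial

def A (k : ℤ) : Matrix (Fin 6) (Fin 6) ℤ :=
  !![-1,-1,0,0,-1,0; 0,-1,0,0,-1,0; 0,0,1,1,1,0; 0,0,0,1,1,0; 0,0,0,0,0,0; 0,0,0,0,1,-k]

noncomputable def alexanderMatrix {R n : Type*} [CommRing R] (V : Matrix n n R) :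
    Matrix n n R[X] :=
  (X : R[X]) • V.map C - (V.map C)ᵀ

lemma alexanderMatrix_A (k : ℤ) :
    alexanderMatrix (A k) =
      !![1 - X, -X, 0, 0, -X, 0;
         1, 1 - X, 0, 0, -X, 0;
         0, 0, X - 1, X, X, 0;
         0, 0, -1, X - 1, X, 0;
         1, 1, -1, -1, 0, -1;
         0, 0, 0, 0, X, (1 - X) * C k] := by
  ext i j : 1
  fin_cases i <;> fin_cases j <;> simp [alexanderMatrix, A] <;> ring

lemma det_alexanderMatrix_A_submatrix_five_five (k : ℤ) :
    det ((alexanderMatrix (A k)).submatrix (Fin.succAbove 5) (Fin.succAbove 5)) = 0 := by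
  refine exists_mulVec_eq_zero_iff.mp ⟨![X, -X ^ 2, X, -X ^ 2, X ^ 2 - X + 1], ?_, ?_⟩
  · intro h
    simpa using congrFun h 0
  · ext i : 1
    fin_cases i <;>
      simp [alexanderMatrix_A, mulVec, dotProduct, Fin.sum_univ_succ, Fin.succAbove] <;> ring

lemma det_alexanderMatrix_A_submatrix_four_five (k : ℤ) :
    det ((alexanderMatrix (A k)).submatrix (Fin.succAbove 4) (Fin.succAbove 5)) =
      X * (X ^ 2 - X + 1) ^ 2 := by
  simp [alexanderMatrix_A, det_succ_row_zero, Fin.sum_univ_succ, Fin.succAbove]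
  ring

lemma det_alexanderMatrix_A (k : ℤ) : det (alexanderMatrix (A k)) = X * (X ^ 2 - X + 1) ^ 2 := by
  rw [det_succ_column _ 5, Fin.sum_univ_six, det_alexanderMatrix_A_submatrix_four_five,
    det_alexanderMatrix_A_submatrix_five_five]
  simp [alexanderMatrix_A]
  ring

theorem stmt_0_general (k : ℤ) :
    ∃ (j : ℕ) (ε : ℤ[X]), (ε = 1 ∨ ε = -1) ∧
      ((X : ℤ[X]) • (A k).map C - ((A k).map C)ᵀ).det
        = ε * X ^ j * (X ^ 2 - X + 1) ^ 2 :=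
  ⟨1, 1, Or.inl rfl, by rw [one_mul, pow_one]; exact det_alexanderMatrix_A k⟩

theorem stmt_0 (k : ℤ) (hk : 2 ≤ k) :
    ∃ (j : ℕ) (ε : ℤ[X]), (ε = 1 ∨ ε = -1) ∧
      ((X : ℤ[X]) • (A k).map C - ((A k).map C)ᵀ).det
        = ε * X ^ j * (X ^ 2 - X + 1) ^ 2 :=
  stmt_0_general k
end

section
/- Let A_k be the 6×6 integer matrix with rows (-1,-1,0,0,-1,0), (0,-1,0,0,-1,0), (0,0,1,1,1,0), (0,0,0,1,1,0), (0,0,0,0,0,0), (0,0,0,0,1,-k), and let ω = e^{iπ/3}. Then for every integer k ≥ 2, the complex matrix M_k = (1-ω)·A_k + (1-ω̄)·A_kᵀ has rank 5. -/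
open Matrix Complex

noncomputable def ω : ℂ := Complex.exp (Real.pi / 3 * Complex.I)

noncomputable def M (k : ℤ) : Matrix (Fin 6) (Fin 6) ℂ :=
  (1 - ω) • (A k).map (fun x => (x : ℂ)) +
    (1 - (starRingEnd ℂ) ω) • ((A k).map (fun x => (x : ℂ)))ᵀ

/-!
Since `conj ω = 1 - ω` and `ω² = ω - 1`, the vector `(ω - 1, 1, ω - 1, 1, 0, 0)` is in the
kernel of `M k`, so its rank is at most 5, while the principal minor obtained by deleting row
and column 3 has determinant `-k ≠ 0`, so its rank is at least 5.
-/

theorem Matrix.rank_lt_card_width_of_mulVec_eq_zero {m n K : Type*} [Fintype m] [Fintype n]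
    [Field K] (A : Matrix m n K) {v : n → K} (hv : v ≠ 0) (hAv : A *ᵥ v = 0) :
    A.rank < Fintype.card n := by
  have hker : 0 < Module.finrank K (LinearMap.ker A.mulVecLin) :=
    Module.finrank_pos_iff_exists_ne_zero.mpr
      ⟨⟨v, hAv⟩, fun h => hv (congrArg Subtype.val h)⟩
  have := LinearMap.finrank_range_add_finrank_ker A.mulVecLin
  rw [Module.finrank_fintype_fun_eq_card] at this
  rw [Matrix.rank]
  omega

theorem Matrix.card_le_rank_of_det_submatrix_ne_zero {m n ι R : Type*} [Fintype n] [Fintype ι]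
    [DecidableEq ι] [CommRing R] [IsDomain R] (A : Matrix m n R) (r : ι → m) (c : ι → n)
    (h : (A.submatrix r c).det ≠ 0) : Fintype.card ι ≤ A.rank :=
  (rank_of_det_ne_zero h).symm.le.trans (A.rank_submatrix_le r c)

theorem ω_eq : ω = 1 / 2 + (Real.sqrt 3 : ℂ) / 2 * I := by
  have h : (Real.pi : ℂ) / 3 * I = ((Real.pi / 3 : ℝ) : ℂ) * I := by push_cast; ring
  rw [ω, h, exp_mul_I, ← ofReal_cos, ← ofReal_sin, Real.cos_pi_div_three,
    Real.sin_pi_div_three]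
  push_cast; ring

theorem ω_sq : ω ^ 2 = ω - 1 := by
  have h3 : (Real.sqrt 3 : ℂ) ^ 2 = 3 := by
    rw [← ofReal_pow, Real.sq_sqrt (by norm_num)]; norm_num
  rw [ω_eq]
  linear_combination (I ^ 2 / 4) * h3 + (3 / 4) * I_sq

theorem conj_ω : starRingEnd ℂ ω = 1 - ω := by
  rw [ω_eq]
  simp only [map_add, map_div₀, map_one, map_mul, conj_ofReal, conj_I, map_ofNat]
  ring

theorem M_eq (k : ℤ) : M k =
    !![-1, ω-1, 0, 0, ω-1, 0;
       -ω, -1, 0, 0, ω-1, 0;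
       0, 0, 1, 1-ω, 1-ω, 0;
       0, 0, ω, 1, 1-ω, 0;
       -ω, -ω, ω, ω, 0, ω;
       0, 0, 0, 0, 1-ω, (-k : ℂ)] := by
  ext i j
  fin_cases i <;> fin_cases j <;> simp [M, A, conj_ω] <;> ring

theorem M_mulVec_eq_zero (k : ℤ) : M k *ᵥ ![ω-1, 1, ω-1, 1, 0, 0] = 0 := by
  rw [M_eq]
  ext i
  fin_cases i <;> simp [mulVec, dotProduct, Fin.sum_univ_succ]
  · linear_combination -ω_sq
  · linear_combination ω_sq

theorem det_M_submatrix_succAbove_three (k : ℤ) :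
    ((M k).submatrix (Fin.succAbove 3) (Fin.succAbove 3)).det = -k := by
  rw [M_eq]
  simp [det_succ_row_zero, Fin.sum_univ_succ, Fin.succAbove]
  linear_combination ((1 - (k:ℂ)) * ω^2 + ((k:ℂ) - 1) * ω + (k:ℂ)) * ω_sq

theorem stmt_1 (k : ℤ) (hk : 2 ≤ k) : (M k).rank = 5 := by
  have hupper : (M k).rank < 6 := by
    simpa using (M k).rank_lt_card_width_of_mulVec_eq_zero (v := ![ω-1, 1, ω-1, 1, 0, 0])
      (fun h => by simpa using congrFun h 1) (M_mulVec_eq_zero k)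
  have hk0 : (-k : ℂ) ≠ 0 := neg_ne_zero.mpr (Int.cast_ne_zero.mpr (by omega))
  have hlower : 5 ≤ (M k).rank := by
    simpa using (M k).card_le_rank_of_det_submatrix_ne_zero _ _
      ((det_M_submatrix_succAbove_three k).trans_ne hk0)
  omega
end

section
/- Let A be a 2g×2g matrix with real (integer) entries which is hyperbolic, i.e., with respect to the block decomposition into four g×g blocks, A = [[0, B],[C, D]] for some g×g matrices B, C, D (the top-left g×g block of A is zero). Then for every ω ∈ ℂ with |ω| = 1 such that the Hermitian matrix M = (1-ω)A + (1-ω̄)Aᵀ is nonsingular, the signature of M is zero. -/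
open Matrix Finset Complex

noncomputable def signature {n : Type*} [Fintype n] [DecidableEq n]
    {N : Matrix n n ℂ} (hN : N.IsHermitian) : ℤ :=
  ((univ.filter fun i => 0 < hN.eigenvalues i).card : ℤ) -
    ((univ.filter fun i => hN.eigenvalues i < 0).card : ℤ)

lemma mem_span_single_support {n : Type*} [Fintype n] [DecidableEq n] (s : Finset n)
    {x : n → ℂ} (hx : x ∈ Submodule.span ℂ (Set.range fun i : s => Pi.single (i : n) (1 : ℂ)))
    {j : n} (hj : j ∉ s) : x j = 0 := by
  have h : Submodule.span ℂ (Set.range fun i : s => Pi.single (i : n) (1 : ℂ)) ≤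
      LinearMap.ker (LinearMap.proj j : (n → ℂ) →ₗ[ℂ] ℂ) := by
    rw [Submodule.span_le]
    rintro _ ⟨i, rfl⟩
    have hij : (i : n) ≠ j := fun h => hj (h ▸ i.2)
    simp [LinearMap.mem_ker, Pi.single_apply, hij]
  exact h hx

lemma card_le_of_isotropic {m : Type*} [Fintype m] [DecidableEq m]
    {N : Matrix (m ⊕ m) (m ⊕ m) ℂ} (hN : N.IsHermitian)
    (hiso : ∀ i j : m, N (Sum.inl i) (Sum.inl j) = 0)
    (s : Finset (m ⊕ m)) (ε : ℝ)
    (hs : ∀ i ∈ s, 0 < ε * hN.eigenvalues i) :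
    s.card ≤ Fintype.card m := by
  by_contra hlt
  push_neg at hlt
  set U : Matrix (m ⊕ m) (m ⊕ m) ℂ := (hN.eigenvectorUnitary : Matrix (m ⊕ m) (m ⊕ m) ℂ) with hU
  have h1 : star U * U = 1 := Unitary.coe_star_mul_self _
  have hinj : LinearMap.ker (Matrix.mulVecLin U) = ⊥ := by
    rw [LinearMap.ker_eq_bot]
    intro a b hab
    have hab' : U *ᵥ a = U *ᵥ b := hab
    have : star U *ᵥ (U *ᵥ a) = star U *ᵥ (U *ᵥ b) := by rw [hab']
    simpa [Matrix.mulVec_mulVec, h1] using this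
  set e : s → ((m ⊕ m) → ℂ) := fun i => Pi.single (i : m ⊕ m) (1 : ℂ) with he_def
  have he : LinearIndependent ℂ e := by
    have := (Pi.basisFun ℂ (m ⊕ m)).linearIndependent.comp Subtype.val
      (Subtype.val_injective (p := fun i => i ∈ s))
    convert this using 1
    funext i
    simp [he_def]
  set f : s → ((m ⊕ m) → ℂ) := fun i => U *ᵥ e i with hf_def
  have hf : LinearIndependent ℂ f := he.map' (Matrix.mulVecLin U) hinj
  set tW : Finset (m ⊕ m) := Finset.univ.image (Sum.inl : m → m ⊕ m) with htW
  set eW : tW → ((m ⊕ m) → ℂ) := fun i => Pi.single (i : m ⊕ m) (1 : ℂ) with heW_def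
  have heW : LinearIndependent ℂ eW := by
    have := (Pi.basisFun ℂ (m ⊕ m)).linearIndependent.comp Subtype.val
      (Subtype.val_injective (p := fun i => i ∈ tW))
    convert this using 1
    funext i
    simp [heW_def]
  set V := Submodule.span ℂ (Set.range f) with hV
  set W := Submodule.span ℂ (Set.range eW) with hW
  have hVr : Module.finrank ℂ V = s.card := by
    rw [hV, finrank_span_eq_card hf, Fintype.card_coe]
  have hWr : Module.finrank ℂ W = Fintype.card m := by
    rw [hW, finrank_span_eq_card heW, Fintype.card_coe, htW,
      Finset.card_image_of_injective _ Sum.inl_injective, Finset.card_univ]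
  have hsum := Submodule.finrank_sup_add_finrank_inf_eq V W
  have hle : Module.finrank ℂ ↥(V ⊔ W) ≤ Fintype.card m + Fintype.card m := by
    have h2 := Submodule.finrank_le (V ⊔ W)
    rwa [Module.finrank_fintype_fun_eq_card, Fintype.card_sum] at h2
  have hpos : 0 < Module.finrank ℂ ↥(V ⊓ W) := by omega
  have : Nontrivial ↥(V ⊓ W) := Module.nontrivial_of_finrank_pos hpos
  obtain ⟨x, hxne⟩ := exists_ne (0 : ↥(V ⊓ W))
  have hxV : (x : (m ⊕ m) → ℂ) ∈ V := x.2.1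
  have hxW : (x : (m ⊕ m) → ℂ) ∈ W := x.2.2
  have hxne' : (x : (m ⊕ m) → ℂ) ≠ 0 := by
    simpa [Submodule.coe_eq_zero] using hxne
  have hxr : ∀ j : m, (x : (m ⊕ m) → ℂ) (Sum.inr j) = 0 := by
    intro j
    refine mem_span_single_support tW hxW ?_
    simp [htW]
  -- the form vanishes on x since x is supported on the isotropic block
  have hzero : star (x : (m ⊕ m) → ℂ) ⬝ᵥ (N *ᵥ (x : (m ⊕ m) → ℂ)) = 0 := by
    rw [dotProduct]
    apply Finset.sum_eq_zero
    intro i _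
    rcases i with i | i
    · have hrow : (N *ᵥ (x : (m ⊕ m) → ℂ)) (Sum.inl i) = 0 := by
        show (fun j => N (Sum.inl i) j) ⬝ᵥ (x : (m ⊕ m) → ℂ) = 0
        rw [dotProduct]
        apply Finset.sum_eq_zero
        intro j _
        rcases j with j | j
        · rw [hiso i j, zero_mul]
        · rw [hxr j, mul_zero]
      rw [hrow, mul_zero]
    · have : (star (x : (m ⊕ m) → ℂ)) (Sum.inr i) = 0 := by
        simp [hxr i]
      rw [this, zero_mul]
  -- write x = U *ᵥ c with c supported on s
  have hVmap : V = Submodule.map (Matrix.mulVecLin U) (Submodule.span ℂ (Set.range e)) := by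
    rw [Submodule.map_span, ← Set.range_comp]
    rfl
  have hxV' : (x : (m ⊕ m) → ℂ) ∈
      Submodule.map (Matrix.mulVecLin U) (Submodule.span ℂ (Set.range e)) := by
    rw [← hVmap]; exact hxV
  obtain ⟨c, hc, hxc⟩ := Submodule.mem_map.mp hxV'
  have hxc' : U *ᵥ c = (x : (m ⊕ m) → ℂ) := hxc
  have hcsupp : ∀ j ∉ s, c j = 0 := fun j hj => mem_span_single_support s hc hj
  have hcne : c ≠ 0 := by
    intro h
    apply hxne'
    rw [← hxc', h, Matrix.mulVec_zero]
  -- compute the form via the spectral theorem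
  set D : Matrix (m ⊕ m) (m ⊕ m) ℂ := Matrix.diagonal (RCLike.ofReal ∘ hN.eigenvalues) with hD
  have hspec : N = U * D * star U := hN.spectral_theorem
  have hzw : ∀ z w : ℂ, star z * (w * z) = w * (Complex.normSq z : ℂ) := by
    intro z w
    rw [Complex.star_def, ← Complex.mul_conj]
    ring
  have hform : star (x : (m ⊕ m) → ℂ) ⬝ᵥ (N *ᵥ (x : (m ⊕ m) → ℂ)) =
      ∑ i, (hN.eigenvalues i : ℂ) * (Complex.normSq (c i) : ℂ) := by
    rw [← hxc']
    conv_lhs => rw [hspec]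
    have hDU : (U * D * star U) *ᵥ (U *ᵥ c) = U *ᵥ (D *ᵥ c) := by
      rw [Matrix.mulVec_mulVec, mul_assoc (U * D) (star U) U, h1, mul_one,
        ← Matrix.mulVec_mulVec]
    rw [hDU, Matrix.star_mulVec, Matrix.dotProduct_mulVec, Matrix.vecMul_vecMul,
      ← Matrix.star_eq_conjTranspose, h1, Matrix.vecMul_one, dotProduct]
    apply Finset.sum_congr rfl
    intro i _
    have hDi : (D *ᵥ c) i = (hN.eigenvalues i : ℂ) * c i := by
      rw [hD, Matrix.mulVec_diagonal]
      rfl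
    rw [hDi, Pi.star_apply, hzw]
  have hre : ∑ i, hN.eigenvalues i * Complex.normSq (c i) = 0 := by
    have h0 : ((∑ i, hN.eigenvalues i * Complex.normSq (c i) : ℝ) : ℂ) = 0 := by
      push_cast
      rw [← hform]
      exact hzero
    exact_mod_cast h0
  have hposum : 0 < ∑ i, ε * (hN.eigenvalues i * Complex.normSq (c i)) := by
    obtain ⟨i0, hi0⟩ := Function.ne_iff.mp hcne
    have hi0s : i0 ∈ s := by
      by_contra h
      exact hi0 (hcsupp i0 h)
    apply Finset.sum_pos'
    · intro i _
      by_cases hi : i ∈ s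
      · rw [← mul_assoc]
        exact mul_nonneg (hs i hi).le (Complex.normSq_nonneg _)
      · rw [hcsupp i hi]
        simp
    · refine ⟨i0, Finset.mem_univ _, ?_⟩
      rw [← mul_assoc]
      exact mul_pos (hs i0 hi0s) (Complex.normSq_pos.mpr hi0)
  rw [← Finset.mul_sum, hre, mul_zero] at hposum
  exact lt_irrefl 0 hposum

theorem stmt_5 {g : ℕ} (A : Matrix (Fin g ⊕ Fin g) (Fin g ⊕ Fin g) ℝ)
    (hA : ∀ i j : Fin g, A (Sum.inl i) (Sum.inl j) = 0)
    (ω : ℂ) (hω : ‖ω‖ = 1)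
    (M : Matrix (Fin g ⊕ Fin g) (Fin g ⊕ Fin g) ℂ)
    (hMdef : M = (1 - ω) • A.map (fun x => (x : ℂ)) +
      (1 - (starRingEnd ℂ) ω) • (A.map (fun x => (x : ℂ)))ᵀ)
    (hM : M.IsHermitian) (hns : M.det ≠ 0) :
    signature hM = 0 := by
  have hiso : ∀ i j : Fin g, M (Sum.inl i) (Sum.inl j) = 0 := by
    intro i j
    simp [hMdef, Matrix.map_apply, Matrix.transpose_apply, hA i j, hA j i]
  have hne : ∀ i, hM.eigenvalues i ≠ 0 := by
    intro i h
    apply hns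
    rw [hM.det_eq_prod_eigenvalues]
    exact Finset.prod_eq_zero (Finset.mem_univ i) (by rw [h]; simp)
  have hp : (univ.filter fun i => 0 < hM.eigenvalues i).card ≤ g := by
    have := card_le_of_isotropic hM hiso
      (univ.filter fun i => 0 < hM.eigenvalues i) 1
      (by intro i hi; simpa using (Finset.mem_filter.mp hi).2)
    simpa using this
  have hq : (univ.filter fun i => hM.eigenvalues i < 0).card ≤ g := by
    have := card_le_of_isotropic hM hiso
      (univ.filter fun i => hM.eigenvalues i < 0) (-1)
      (by
        intro i hi
        have := (Finset.mem_filter.mp hi).2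
        nlinarith)
    simpa using this
  have hpq : (univ.filter fun i => 0 < hM.eigenvalues i).card +
      (univ.filter fun i => hM.eigenvalues i < 0).card = g + g := by
    have hfc : (univ.filter fun i => ¬ 0 < hM.eigenvalues i) =
        (univ.filter fun i => hM.eigenvalues i < 0) := by
      apply Finset.filter_congr
      intro i _
      constructor
      · intro h
        exact (not_lt.mp h).lt_of_ne (hne i)
      · intro h
        exact not_lt.mpr h.le
    have := Finset.card_filter_add_card_filter_not
      (s := (univ : Finset (Fin g ⊕ Fin g))) (p := fun i => 0 < hM.eigenvalues i)
    rw [hfc] at this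
    rw [this, Finset.card_univ, Fintype.card_sum, Fintype.card_fin]
  unfold signature
  omega
end

section
/- Let A_k be the 6×6 integer matrix with rows (-1,-1,0,0,-1,0), (0,-1,0,0,-1,0), (0,0,1,1,1,0), (0,0,0,1,1,0), (0,0,0,0,0,0), (0,0,0,0,1,-k), and ω = e^{iπ/3}. Then for every integer k ≥ 2, det((1-ω)A_k + (1-ω̄)A_kᵀ) = 0. -/
open Matrix Complex

lemma omega_eq : ω = (1/2 : ℝ) + (Real.sqrt 3 / 2 : ℝ) * Complex.I := by
  have h : (↑(Real.pi) / 3 : ℂ) * Complex.I = ((Real.pi / 3 : ℝ) : ℂ) * Complex.I := by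
    push_cast; ring
  rw [ω, h, Complex.exp_mul_I, ← Complex.ofReal_cos, ← Complex.ofReal_sin,
    Real.cos_pi_div_three, Real.sin_pi_div_three]

lemma conj_omega : (starRingEnd ℂ) ω = 1 - ω := by
  rw [omega_eq]
  simp only [map_add, _root_.map_mul, Complex.conj_ofReal, Complex.conj_I]
  push_cast
  ring

lemma omega_rel : ω ^ 2 - ω + 1 = 0 := by
  have h3 : ((Real.sqrt 3 : ℝ) : ℂ) ^ 2 = 3 := by
    rw [← Complex.ofReal_pow, Real.sq_sqrt (by norm_num : (0:ℝ) ≤ 3)]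
    norm_num
  have key : ((Real.sqrt 3 : ℝ) : ℂ) ^ 2 * Complex.I ^ 2 = -3 := by
    rw [h3, Complex.I_sq]; ring
  rw [omega_eq]
  push_cast
  linear_combination (1/4 : ℂ) * key


lemma cvA {α : Type*} (x : α) (u : Fin 5 → α) : Matrix.vecCons x u 5 = u 4 := rfl
lemma cvB {α : Type*} (x : α) (u : Fin 4 → α) : Matrix.vecCons x u 4 = u 3 := rfl
lemma cvC {α : Type*} (x : α) (u : Fin 3 → α) : Matrix.vecCons x u 3 = u 2 := rfl
lemma cvD {α : Type*} (x : α) (u : Fin 2 → α) : Matrix.vecCons x u 2 = u 1 := rfl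
lemma cvE {α : Type*} (x : α) (u : Fin 1 → α) : Matrix.vecCons x u 1 = u 0 := rfl

theorem stmt_9 (k : ℤ) (hk : 2 ≤ k) : (M k).det = 0 := by
  rw [← Matrix.exists_mulVec_eq_zero_iff]
  refine ⟨![ω - 1, 1, ω - 1, 1, 0, 0], ?_, ?_⟩
  · intro h
    have h1 : (![ω - 1, 1, ω - 1, 1, 0, 0] : Fin 6 → ℂ) 1 = 0 := by rw [h]; rfl
    simp at h1
  · funext i
    have hc := conj_omega
    have hr := omega_rel
    fin_cases i <;>
      simp [M, A, Matrix.mulVec, dotProduct, Fin.sum_univ_six, hc,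
        cvA, cvB, cvC, cvD, cvE, Matrix.vecHead, Matrix.vecTail] <;>
      first
        | linear_combination hr
        | linear_combination -hr
        | linear_combination 2*hr
        | linear_combination -2*hr
        | ring
end

section
/- Let A be a square integer matrix such that det(tA - Aᵀ), as a polynomial in t, equals ±t^j·(t²-t+1)² for some j, and let ω ∈ S¹ ⊂ ℂ be a point that is not a root of t²-t+1. Then the Hermitian matrix (1-ω)A + (1-ω̄)Aᵀ is nonsingular whenever ω ≠ 1. -/
open Matrix Polynomial Complex

theorem stmt_19 {n : ℕ} (A : Matrix (Fin n) (Fin n) ℤ)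
    (halex : ∃ (j : ℕ) (ε : ℤ[X]), (ε = 1 ∨ ε = -1) ∧
      ((X : ℤ[X]) • A.map C - (A.map C)ᵀ).det = ε * X ^ j * (X ^ 2 - X + 1) ^ 2)
    (ω : ℂ) (hω : ‖ω‖ = 1) (hω1 : ω ≠ 1)
    (hωroot : ω ^ 2 - ω + 1 ≠ 0) :
    ((1 - ω) • A.map (fun x => (x : ℂ)) +
        (1 - (starRingEnd ℂ) ω) • (A.map (fun x => (x : ℂ)))ᵀ).det ≠ 0 := by
  obtain ⟨j, ε, hε, hdet⟩ := halex
  set B := A.map (fun x => (x : ℂ)) with hB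
  set c := (starRingEnd ℂ) ω with hc
  have hmc : ω * c = 1 := by
    rw [hc, Complex.mul_conj]
    norm_cast
    rw [Complex.normSq_eq_norm_sq, hω]; norm_num
  have hc0 : c ≠ 0 := by
    intro h; rw [h, mul_zero] at hmc; exact one_ne_zero hmc.symm
  have key : (1 - ω) • B + (1 - c) • Bᵀ = (1 - ω) • (B - c • Bᵀ) := by
    ext i k
    simp only [Matrix.smul_apply, Matrix.sub_apply, Matrix.add_apply, smul_eq_mul,
      Matrix.transpose_apply]
    linear_combination (-(B k i)) * hmc
  set phi : ℤ[X] →+* ℂ := eval₂RingHom (Int.castRingHom ℂ) c with hphi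
  have hmap : ((X : ℤ[X]) • A.map C - (A.map C)ᵀ).map phi
      = c • B - Bᵀ := by
    have hint : ∀ m : ℤ, eval₂ (Int.castRingHom ℂ) c ((m : ℤ[X])) = (m : ℂ) := fun m => by
      rw [← C_eq_intCast, eval₂_C]; simp
    ext i k
    simp [hphi, Matrix.smul_apply, Matrix.sub_apply, Matrix.map_apply, hB, coe_eval₂RingHom, eval₂_X, eval₂_C, hint]
  have hdet2 : (c • B - Bᵀ).det = phi
      (((X : ℤ[X]) • A.map C - (A.map C)ᵀ).det) := by
    rw [RingHom.map_det, RingHom.mapMatrix_apply, hmap]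
  have hεval : phi ε ≠ 0 := by
    rcases hε with h | h <;> simp [h]
  have hroot2 : c ^ 2 - c + 1 ≠ 0 := by
    intro h
    apply hωroot
    have := congrArg (starRingEnd ℂ) h
    simpa [hc, Complex.conj_conj] using this
  have hdet3 : (c • B - Bᵀ).det ≠ 0 := by
    rw [hdet2, hdet]
    simp only [_root_.map_mul, map_pow, map_sub, _root_.map_add, hphi, coe_eval₂RingHom, eval₂_X, _root_.map_one]
    exact mul_ne_zero (mul_ne_zero hεval (pow_ne_zero _ hc0)) (pow_ne_zero _ hroot2)
  have htrans : (B - c • Bᵀ).det = (-1 : ℂ) ^ n * (c • B - Bᵀ).det := by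
    have : (B - c • Bᵀ) = (-(c • B - Bᵀ))ᵀ := by
      ext i k
      simp [mul_comm]
    rw [this, Matrix.det_transpose, Matrix.det_neg]
    simp
  rw [key, Matrix.det_smul, htrans]
  refine mul_ne_zero (pow_ne_zero _ ?_) (mul_ne_zero (pow_ne_zero _ (by norm_num)) hdet3)
  exact sub_ne_zero.mpr (Ne.symm hω1)
end
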